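/- Let W, H be positive integers, let λ ∈ (0,1), and let h_λ : ℝ → ℝ be the leaky ReLU function defined by h_λ(t) = t if t > 0 and h_λ(t) = λt if t ≤ 0. For any real matrix x : (ZMod W) × (ZMod H) → ℝ, let F(x) denote its two-dimensional discrete Fourier transform, F(x)(k,l) = Σ_{m,n} x(m,n)·exp(−2πi(mk/W + nl/H)). Then ‖F(h_λ ∘ x)‖ ≤ ‖F(x)‖, where ‖·‖ denotes the Frobenius norm (the square root of the sum of squared complex absolute values of all entries) and h_λ ∘ x denotes entrywise application of h_λ. -/

import Mathlib

open Finset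

/-- Leaky ReLU with slope `lam`. -/
noncomputable def lrelu (lam : ℝ) (t : ℝ) : ℝ := if 0 < t then t else lam * t

/-- Two-dimensional discrete Fourier transform of a complex matrix indexed by
`ZMod W × ZMod H`. -/
noncomputable def dft2 {W H : ℕ} [NeZero W] [NeZero H]
    (x : ZMod W × ZMod H → ℂ) : ZMod W × ZMod H → ℂ :=
  fun k => ∑ m : ZMod W × ZMod H,
    x m * Complex.exp
      (((-(2 * Real.pi * ((m.1.val * k.1.val : ℝ) / (W : ℝ) +
          (m.2.val * k.2.val : ℝ) / (H : ℝ)))) : ℝ) * Complex.I)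

/-- Frobenius norm of a finitely indexed family of complex numbers. -/
noncomputable def frob {ι : Type*} [Fintype ι] (X : ι → ℂ) : ℝ :=
  Real.sqrt (∑ i, ‖X i‖ ^ 2)

/-- Entrywise complexification of a real matrix. -/
def toC {α : Type*} (x : α → ℝ) : α → ℂ := fun i => (x i : ℂ)



noncomputable def e1 (W : ℕ) (a k : ZMod W) : ℂ :=
  Complex.exp (((-(2 * Real.pi * ((a.val * k.val : ℝ) / (W : ℝ)))) : ℝ) * Complex.I)

lemma sum_zmod_val {W : ℕ} [NeZero W] (f : ℕ → ℂ) :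
    ∑ k : ZMod W, f k.val = ∑ j ∈ Finset.range W, f j := by
  refine Finset.sum_nbij' (fun k => k.val) (fun j => (j : ZMod W)) ?_ ?_ ?_ ?_ ?_
  · intro k _; exact Finset.mem_range.2 (ZMod.val_lt k)
  · intro j _; exact Finset.mem_univ _
  · intro k _; exact ZMod.natCast_rightInverse k
  · intro j hj; exact ZMod.val_cast_of_lt (Finset.mem_range.1 hj)
  · intro k _; rfl

lemma orth {W : ℕ} [NeZero W] (a b : ZMod W) :
    ∑ k : ZMod W, e1 W a k * (starRingEnd ℂ) (e1 W b k)
    = if a = b then (W : ℂ) else 0 := by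
  have hW : (0:ℝ) < W := Nat.cast_pos.2 (Nat.pos_of_ne_zero (NeZero.ne W))
  have hWC : (W:ℂ) ≠ 0 := Nat.cast_ne_zero.2 (NeZero.ne W)
  set c : ℤ := (b.val : ℤ) - a.val with hc
  set ζ : ℂ := Complex.exp ((((2 * Real.pi * (c : ℝ) / W) : ℝ) : ℂ) * Complex.I) with hζ
  have hterm : ∀ k : ZMod W, e1 W a k * (starRingEnd ℂ) (e1 W b k) = ζ ^ k.val := by
    intro k
    rw [e1, e1, ← Complex.exp_conj, ← Complex.exp_add, ← Complex.exp_nat_mul]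
    congr 1
    simp only [map_mul, Complex.conj_ofReal, Complex.conj_I, hc]
    push_cast
    field_simp
    ring
  simp_rw [hterm]
  rw [sum_zmod_val (fun j => ζ ^ j)]
  by_cases hab : a = b
  · subst hab
    have hc0 : c = 0 := by simp [hc]
    have hζ1 : ζ = 1 := by rw [hζ, hc0]; norm_num
    simp [hζ1]
  · rw [if_neg hab]
    have hζW : ζ ^ W = 1 := by
      rw [hζ, ← Complex.exp_nat_mul]
      have : (W : ℂ) * ((((2 * Real.pi * (c : ℝ) / W) : ℝ) : ℂ) * Complex.I)
          = (c : ℂ) * (2 * Real.pi * Complex.I) := by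
        push_cast
        field_simp
      rw [this, Complex.exp_int_mul_two_pi_mul_I]
    have hclt : c < W := by
      have := ZMod.val_lt b
      omega
    have hcgt : -(W:ℤ) < c := by
      have := ZMod.val_lt a
      omega
    have hζ1 : ζ ≠ 1 := by
      intro h
      rw [hζ, Complex.exp_eq_one_iff] at h
      obtain ⟨n, hn⟩ := h
      have him := congrArg Complex.im hn
      simp [Complex.mul_im, Complex.ofReal_im, Complex.I_im, Complex.I_re] at him
      -- him : 2 * π * c / W = n * (2 * π)
      have hpi : (0:ℝ) < Real.pi := Real.pi_pos
      have h4 : (c : ℝ) = n * W := by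
        field_simp at him
        nlinarith [him]
      have h5 : c = n * W := by exact_mod_cast h4
      have hn0 : n = 0 := by
        by_contra hn0
        have h1 : (1:ℤ) ≤ |n| := Int.one_le_abs (by omega)
        have h2 : (W:ℤ) ≤ |c| := by
          rw [h5, abs_mul, abs_of_nonneg (by positivity : (0:ℤ) ≤ (W:ℤ))]
          nlinarith [abs_nonneg n]
        have h3 : |c| < W := abs_lt.2 ⟨hcgt, hclt⟩
        omega
      have : c = 0 := by rw [h5, hn0]; ring
      have : a.val = b.val := by omega
      exact hab (ZMod.val_injective W this)
    rw [geom_sum_eq hζ1, hζW]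
    simp


lemma E_split {W H : ℕ} (m k : ZMod W × ZMod H) :
    Complex.exp
      (((-(2 * Real.pi * ((m.1.val * k.1.val : ℝ) / (W : ℝ) +
          (m.2.val * k.2.val : ℝ) / (H : ℝ)))) : ℝ) * Complex.I)
    = e1 W m.1 k.1 * e1 H m.2 k.2 := by
  rw [e1, e1, ← Complex.exp_add]
  congr 1
  push_cast
  ring

lemma orth2 {W H : ℕ} [NeZero W] [NeZero H] (a b : ZMod W × ZMod H) :
    ∑ k : ZMod W × ZMod H,
      (e1 W a.1 k.1 * e1 H a.2 k.2) * (starRingEnd ℂ) (e1 W b.1 k.1 * e1 H b.2 k.2)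
    = if a = b then ((W : ℂ) * H) else 0 := by
  rw [Fintype.sum_prod_type]
  have : ∀ k1 : ZMod W, ∀ k2 : ZMod H,
      (e1 W a.1 k1 * e1 H a.2 k2) * (starRingEnd ℂ) (e1 W b.1 k1 * e1 H b.2 k2)
      = (e1 W a.1 k1 * (starRingEnd ℂ) (e1 W b.1 k1)) *
        (e1 H a.2 k2 * (starRingEnd ℂ) (e1 H b.2 k2)) := by
    intro k1 k2; rw [map_mul]; ring
  simp_rw [this, ← Finset.mul_sum, ← Finset.sum_mul, orth]
  rcases eq_or_ne a b with h | h
  · simp [h, Prod.ext_iff]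
  · rw [if_neg h]
    by_cases h1 : a.1 = b.1
    · have h2 : a.2 ≠ b.2 := fun h2 => h (Prod.ext h1 h2)
      rw [if_neg h2, mul_zero]
    · rw [if_neg h1, zero_mul]

lemma parseval {W H : ℕ} [NeZero W] [NeZero H] (x : ZMod W × ZMod H → ℂ) :
    ∑ k, Complex.normSq (dft2 x k) = (W : ℝ) * H * ∑ m, Complex.normSq (x m) := by
  have key : ∑ k, dft2 x k * (starRingEnd ℂ) (dft2 x k)
      = ((W : ℂ) * H) * ∑ m, x m * (starRingEnd ℂ) (x m) := by
    calc ∑ k, dft2 x k * (starRingEnd ℂ) (dft2 x k)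
        = ∑ k : ZMod W × ZMod H, ∑ m, ∑ m',
            (x m * (starRingEnd ℂ) (x m')) *
            ((e1 W m.1 k.1 * e1 H m.2 k.2) *
              (starRingEnd ℂ) (e1 W m'.1 k.1 * e1 H m'.2 k.2)) := by
          refine Finset.sum_congr rfl fun k _ => ?_
          simp only [dft2, E_split, map_sum, map_mul, Finset.sum_mul_sum]
          exact Finset.sum_congr rfl fun m _ => Finset.sum_congr rfl fun m' _ => by ring
      _ = ∑ m, ∑ m', (x m * (starRingEnd ℂ) (x m')) *
            ∑ k : ZMod W × ZMod H,
            ((e1 W m.1 k.1 * e1 H m.2 k.2) *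
              (starRingEnd ℂ) (e1 W m'.1 k.1 * e1 H m'.2 k.2)) := by
          rw [Finset.sum_comm]
          refine Finset.sum_congr rfl fun m _ => ?_
          rw [Finset.sum_comm]
          exact Finset.sum_congr rfl fun m' _ => (Finset.mul_sum _ _ _).symm
      _ = ∑ m, ∑ m', (x m * (starRingEnd ℂ) (x m')) *
            (if m = m' then ((W : ℂ) * H) else 0) := by
          simp_rw [orth2]
      _ = ((W : ℂ) * H) * ∑ m, x m * (starRingEnd ℂ) (x m) := by
          rw [Finset.mul_sum]
          refine Finset.sum_congr rfl fun m _ => ?_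
          simp [mul_ite, Finset.sum_ite_eq]
          ring
  have := congrArg Complex.re key
  simpa [Complex.mul_conj, ← Complex.ofReal_sum, Complex.ofReal_mul, Finset.mul_sum] using this

/-- Theorem 1: applying the leaky ReLU entrywise does not increase the
Frobenius norm of the 2D discrete Fourier transform. -/
theorem frob_dft2_lrelu_le (W H : ℕ) [NeZero W] [NeZero H]
    (lam : ℝ) (hlam : lam ∈ Set.Ioo (0 : ℝ) 1)
    (x : ZMod W × ZMod H → ℝ) :
    frob (dft2 (toC (fun i => lrelu lam (x i)))) ≤ frob (dft2 (toC x)) := by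
  unfold frob
  apply Real.sqrt_le_sqrt
  simp_rw [Complex.sq_norm]
  rw [parseval, parseval]
  refine mul_le_mul_of_nonneg_left (Finset.sum_le_sum fun i _ => ?_) (by positivity)
  simp only [toC, Complex.normSq_ofReal]
  unfold lrelu
  split_ifs with h
  · exact le_refl _
  · nlinarith [hlam.1, hlam.2, sq_nonneg (x i), mul_nonneg (mul_nonneg hlam.1.le hlam.1.le) (sq_nonneg (x i)), mul_le_one₀ hlam.2.le hlam.1.le hlam.2.le]
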